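/- In the ReLU-network setting, the expected loss θ ↦ E_z[f(θ, z)] is Lipschitz continuous on Θ. -/

import Mathlib

open MeasureTheory
open scoped BigOperators

noncomputable section

/-- Parameter space of an `n`-layer fully connected network with layer widths `κ`:
for each layer `i` a weight matrix `W_i ∈ ℝ^{κ(i+1) × κ i}` and a bias `b_i ∈ ℝ^{κ(i+1)}`. -/
abbrev NNParams (κ : ℕ → ℕ) (n : ℕ) :=
  (i : Fin n) → ((Fin (κ (i.1 + 1)) → Fin (κ i.1) → ℝ) × (Fin (κ (i.1 + 1)) → ℝ))

/-- The layers of the ReLU network: `x₀ = z`, `x_{i+1} = max(0, W_{i+1} x_i + b_{i+1})`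
entrywise for the hidden layers `i + 1 ≤ n - 1`, and the affine output layer
`x_n = W_n x_{n-1} + b_n` (junk value `0` beyond layer `n`). -/
def reluNet (κ : ℕ → ℕ) (n : ℕ) (θ : NNParams κ n) (z : Fin (κ 0) → ℝ) :
    (i : ℕ) → Fin (κ i) → ℝ
  | 0 => z
  | (i + 1) =>
    if h : i < n then
      fun j =>
        let pre := (∑ l, (θ ⟨i, h⟩).1 j l * reluNet κ n θ z i l) + (θ ⟨i, h⟩).2 j
        if i + 2 ≤ n then max 0 pre else pre
    else 0

/-- Squared-error loss `f(θ,z) = ‖x_n(θ,z) − f̂(z)‖²` of the ReLU network. -/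
def reluLoss (κ : ℕ → ℕ) (n : ℕ) (fhat : (Fin (κ 0) → ℝ) → (Fin (κ n) → ℝ))
    (θ : NNParams κ n) (z : Fin (κ 0) → ℝ) : ℝ :=
  ∑ j, (reluNet κ n θ z n j - fhat z j) ^ 2

/-- The standard Gaussian measure on `ℝ^d` (i.i.d. `N(0,1)` coordinates). -/
def stdGaussian (d : ℕ) : Measure (Fin d → ℝ) :=
  Measure.pi fun _ => ProbabilityTheory.gaussianReal 0 1

/-- `θ` gives a.e. nonzero hidden-layer preactivations: for a.e. input `z`, every
hidden-layer preactivation `W_i^j x_{i-1} + b_i^j` is nonzero (so that `∇_θ f(θ,z)`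
exists for a.e. `z`). -/
def NonzeroPreact (κ : ℕ → ℕ) (n : ℕ) (θ : NNParams κ n) : Prop :=
  ∀ᵐ z ∂(stdGaussian (κ 0)), ∀ (i : ℕ) (h : i < n), i + 2 ≤ n →
    ∀ j : Fin (κ (i + 1)),
      (∑ l, (θ ⟨i, h⟩).1 j l * reluNet κ n θ z i l) + (θ ⟨i, h⟩).2 j ≠ 0

/-!
On a bounded parameter set, induction over the layers shows that every layer output is bounded by
`C (1 + ‖z‖)` and is Lipschitz in `θ` with constant `L (1 + ‖z‖)`, since ReLU is 1-Lipschitz and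
vanishes at `0`. Factoring `(a - f)² - (a' - f)² = (a - a') (a + a' - 2f)` and absorbing the cross
term `(1 + ‖z‖) |f|` by AM–GM gives
`|f(θ,z) - f(θ',z)| ≤ (A (1 + ‖z‖)² + B ‖f̂(z)‖²) ‖θ - θ'‖`, whose right-hand side is integrable
because Gaussian coordinates have second moments; integrating in `z` gives the Lipschitz bound.
-/

section Affine

variable {ι : Type*} [Fintype ι]

lemma abs_sum_mul_add_sub_sum_mul_add_le {w w' x x' : ι → ℝ} {b b' R X D E B : ℝ}
    (hw' : ∀ l, |w' l| ≤ R) (hx : ∀ l, |x l| ≤ X)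
    (hdw : ∀ l, |w l - w' l| ≤ D) (hdx : ∀ l, |x l - x' l| ≤ E) (hdb : |b - b'| ≤ B) :
    |(∑ l, w l * x l + b) - (∑ l, w' l * x' l + b')|
      ≤ Fintype.card ι * (D * X + R * E) + B := by
  have hterm : ∀ l ∈ Finset.univ, |w l * x l - w' l * x' l| ≤ D * X + R * E := by
    intro l _
    have hD : 0 ≤ D := (abs_nonneg _).trans (hdw l)
    have hR : 0 ≤ R := (abs_nonneg _).trans (hw' l)
    calc |w l * x l - w' l * x' l| = |(w l - w' l) * x l + w' l * (x l - x' l)| := by ring_nf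
      _ ≤ |w l - w' l| * |x l| + |w' l| * |x l - x' l| := by
        rw [← abs_mul, ← abs_mul]; exact abs_add_le _ _
      _ ≤ D * X + R * E := by
        gcongr
        · exact hdw l
        · exact hx l
        · exact hw' l
        · exact hdx l
  calc |(∑ l, w l * x l + b) - (∑ l, w' l * x' l + b')|
      = |∑ l, (w l * x l - w' l * x' l) + (b - b')| := by rw [Finset.sum_sub_distrib]; ring_nf
    _ ≤ ∑ l, |w l * x l - w' l * x' l| + |b - b'| :=
      (abs_add_le _ _).trans (add_le_add_left (Finset.abs_sum_le_sum_abs _ _) _)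
    _ ≤ Fintype.card ι * (D * X + R * E) + B := by
      gcongr
      exact (Finset.sum_le_card_nsmul _ _ _ hterm).trans_eq (by simp [mul_add])

lemma abs_sum_mul_add_le {w x : ι → ℝ} {b R X B : ℝ}
    (hw : ∀ l, |w l| ≤ R) (hx : ∀ l, |x l| ≤ X) (hb : |b| ≤ B) :
    |∑ l, w l * x l + b| ≤ Fintype.card ι * (R * X) + B := by
  simpa using abs_sum_mul_add_sub_sum_mul_add_le (w' := 0) (x' := x) (b' := 0) (R := 0) (E := 0)
    (by simp) hx (by simpa using hw) (by simp) (by simpa using hb)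

end Affine

lemma abs_ite_max_zero_sub_le (p : Prop) [Decidable p] (a b : ℝ) :
    |(if p then max 0 a else a) - (if p then max 0 b else b)| ≤ |a - b| := by
  split_ifs
  · rw [max_comm 0 a, max_comm 0 b]
    exact abs_max_sub_max_le_abs a b 0
  · exact le_rfl

lemma abs_ite_max_zero_le (p : Prop) [Decidable p] (a : ℝ) :
    |(if p then max 0 a else a)| ≤ |a| := by
  simpa using abs_ite_max_zero_sub_le p a 0

lemma sub_sq_le_of_abs_le {a b f : ℝ} (ha : |a| ≤ b) : (a - f) ^ 2 ≤ 2 * b ^ 2 + 2 * f ^ 2 := by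
  nlinarith [sq_abs a, abs_nonneg a, sq_nonneg (a + f)]

lemma abs_sub_sq_sub_sub_sq_le {a a' f t C M : ℝ} (ht : 0 < t) (ha : |a| ≤ C * t)
    (ha' : |a'| ≤ C * t) (hd : |a - a'| ≤ M * t) :
    |(a - f) ^ 2 - (a' - f) ^ 2| ≤ M * ((2 * C + 1) * t ^ 2 + f ^ 2) := by
  have hM : 0 ≤ M := nonneg_of_mul_nonneg_left ((abs_nonneg _).trans hd) ht
  have hsum : |a + a' - 2 * f| ≤ 2 * C * t + 2 * |f| := by
    rw [abs_le] at ha ha' ⊢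
    constructor <;> linarith [neg_abs_le f, le_abs_self f]
  calc |(a - f) ^ 2 - (a' - f) ^ 2| = |a - a'| * |a + a' - 2 * f| := by
        rw [← abs_mul]; ring_nf
    _ ≤ M * t * (2 * C * t + 2 * |f|) := mul_le_mul hd hsum (abs_nonneg _) (by positivity)
    _ ≤ M * ((2 * C + 1) * t ^ 2 + f ^ 2) := by
        nlinarith [mul_nonneg hM (sq_nonneg (t - |f|)), sq_abs f]

lemma lipschitzOnWith_integral_of_abs_sub_le {X Ω : Type*} [PseudoMetricSpace X]
    [MeasurableSpace Ω] {μ : Measure Ω} {F : X → Ω → ℝ} {g : Ω → ℝ} {s : Set X}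
    (hF : ∀ x ∈ s, Integrable (F x) μ) (hg : Integrable g μ)
    (hFg : ∀ x ∈ s, ∀ y ∈ s, ∀ᵐ ω ∂μ, |F x ω - F y ω| ≤ g ω * dist x y) :
    LipschitzOnWith (∫ ω, g ω ∂μ).toNNReal (fun x => ∫ ω, F x ω ∂μ) s := by
  refine LipschitzOnWith.of_dist_le_mul fun x hx y hy => ?_
  rw [Real.dist_eq, ← integral_sub (hF x hx) (hF y hy), ← Real.norm_eq_abs]
  calc ‖∫ ω, F x ω - F y ω ∂μ‖ ≤ ∫ ω, g ω * dist x y ∂μ :=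
        norm_integral_le_of_norm_le (hg.mul_const _) (hFg x hx y hy)
    _ = (∫ ω, g ω ∂μ) * dist x y := integral_mul_const _ _
    _ ≤ _ := mul_le_mul_of_nonneg_right (Real.le_coe_toNNReal _) dist_nonneg

instance (d : ℕ) : IsProbabilityMeasure (stdGaussian d) := by
  unfold stdGaussian; infer_instance

lemma memLp_id_stdGaussian (d : ℕ) (p : NNReal) : MemLp id p (stdGaussian d) :=
  MemLp.of_eval fun k =>
    (ProbabilityTheory.memLp_id_gaussianReal p).comp_measurePreserving (measurePreserving_eval _ k)

lemma integrable_one_add_norm_sq_stdGaussian (d : ℕ) :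
    Integrable (fun z : Fin d → ℝ => (1 + ‖z‖) ^ 2) (stdGaussian d) := by
  have hnorm : MemLp (fun z : Fin d → ℝ => ‖z‖) 2 (stdGaussian d) :=
    (memLp_id_stdGaussian d 2).norm
  exact ((memLp_const (1 : ℝ)).add hnorm).integrable_sq

namespace NNParams

variable {κ : ℕ → ℕ} {n : ℕ}

lemma abs_weight_le_norm (θ : NNParams κ n) (i : Fin n) (j : Fin (κ (i.1 + 1))) (l : Fin (κ i.1)) :
    |(θ i).1 j l| ≤ ‖θ‖ :=
  calc |(θ i).1 j l| ≤ ‖(θ i).1 j‖ := norm_le_pi_norm ((θ i).1 j) l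
    _ ≤ ‖(θ i).1‖ := norm_le_pi_norm _ j
    _ ≤ ‖θ i‖ := norm_fst_le (θ i)
    _ ≤ ‖θ‖ := norm_le_pi_norm θ i

lemma abs_bias_le_norm (θ : NNParams κ n) (i : Fin n) (j : Fin (κ (i.1 + 1))) :
    |(θ i).2 j| ≤ ‖θ‖ :=
  calc |(θ i).2 j| ≤ ‖(θ i).2‖ := norm_le_pi_norm (θ i).2 j
    _ ≤ ‖θ i‖ := norm_snd_le (θ i)
    _ ≤ ‖θ‖ := norm_le_pi_norm θ i

lemma abs_weight_sub_le_dist (θ θ' : NNParams κ n) (i : Fin n) (j : Fin (κ (i.1 + 1)))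
    (l : Fin (κ i.1)) : |(θ i).1 j l - (θ' i).1 j l| ≤ dist θ θ' := by
  simpa [dist_eq_norm] using abs_weight_le_norm (θ - θ') i j l

lemma abs_bias_sub_le_dist (θ θ' : NNParams κ n) (i : Fin n) (j : Fin (κ (i.1 + 1))) :
    |(θ i).2 j - (θ' i).2 j| ≤ dist θ θ' := by
  simpa [dist_eq_norm] using abs_bias_le_norm (θ - θ') i j

end NNParams

section Network

variable {κ : ℕ → ℕ} {n : ℕ}

lemma reluNet_succ (θ : NNParams κ n) (z : Fin (κ 0) → ℝ) {i : ℕ} (h : i < n)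
    (j : Fin (κ (i + 1))) :
    reluNet κ n θ z (i + 1) j =
      if i + 2 ≤ n then max 0 ((∑ l, (θ ⟨i, h⟩).1 j l * reluNet κ n θ z i l) + (θ ⟨i, h⟩).2 j)
      else (∑ l, (θ ⟨i, h⟩).1 j l * reluNet κ n θ z i l) + (θ ⟨i, h⟩).2 j := by
  simp only [reluNet, dif_pos h]

lemma reluNet_succ_of_le (θ : NNParams κ n) (z : Fin (κ 0) → ℝ) {i : ℕ} (h : n ≤ i) :
    reluNet κ n θ z (i + 1) = 0 := by
  simp only [reluNet, dif_neg h.not_gt]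

lemma continuous_reluNet (θ : NNParams κ n) (i : ℕ) (j : Fin (κ i)) :
    Continuous fun z => reluNet κ n θ z i j := by
  induction i with
  | zero => exact continuous_apply j
  | succ i ih =>
    rcases lt_or_ge i n with h | h
    · simp only [reluNet_succ _ _ h]
      have hpre : Continuous fun z =>
          (∑ l, (θ ⟨i, h⟩).1 j l * reluNet κ n θ z i l) + (θ ⟨i, h⟩).2 j := by
        fun_prop
      split_ifs
      · exact continuous_const.max hpre
      · exact hpre
    · simp only [reluNet_succ_of_le _ _ h, Pi.zero_apply]
      exact continuous_const

lemma exists_abs_reluNet_le (R : ℝ) (i : ℕ) :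
    ∃ C, ∀ θ : NNParams κ n, ‖θ‖ ≤ R → ∀ z j, |reluNet κ n θ z i j| ≤ C * (1 + ‖z‖) := by
  induction i with
  | zero =>
    refine ⟨1, fun θ _ z j => ?_⟩
    rw [one_mul]
    exact (norm_le_pi_norm z j).trans (le_add_of_nonneg_left zero_le_one)
  | succ i ih =>
    obtain ⟨C, hC⟩ := ih
    rcases lt_or_ge i n with h | h
    · refine ⟨κ i * (R * C) + R, fun θ hθ z j => ?_⟩
      have hR : 0 ≤ R := (norm_nonneg θ).trans hθ
      have hz : 1 ≤ 1 + ‖z‖ := le_add_of_nonneg_right (norm_nonneg z)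
      rw [reluNet_succ θ z h j]
      refine (abs_ite_max_zero_le _ _).trans ?_
      calc _ ≤ κ i * (R * (C * (1 + ‖z‖))) + R * (1 + ‖z‖) := by
            simpa using abs_sum_mul_add_le (fun l => (θ.abs_weight_le_norm ⟨i, h⟩ j l).trans hθ)
              (hC θ hθ z) ((θ.abs_bias_le_norm ⟨i, h⟩ j).trans
                (hθ.trans (le_mul_of_one_le_right hR hz)))
        _ = _ := by ring
    · exact ⟨0, fun θ _ z j => by simp [reluNet_succ_of_le θ z h]⟩

lemma exists_abs_reluNet_sub_le (R : ℝ) (i : ℕ) :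
    ∃ L, ∀ θ θ' : NNParams κ n, ‖θ‖ ≤ R → ‖θ'‖ ≤ R → ∀ z j,
      |reluNet κ n θ z i j - reluNet κ n θ' z i j| ≤ L * (1 + ‖z‖) * dist θ θ' := by
  induction i with
  | zero => exact ⟨0, fun θ θ' _ _ z j => by simp [reluNet]⟩
  | succ i ih =>
    obtain ⟨L, hL⟩ := ih
    obtain ⟨C, hC⟩ := exists_abs_reluNet_le (κ := κ) (n := n) R i
    rcases lt_or_ge i n with h | h
    · refine ⟨κ i * (C + R * L) + 1, fun θ θ' hθ hθ' z j => ?_⟩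
      have hz : 1 ≤ 1 + ‖z‖ := le_add_of_nonneg_right (norm_nonneg z)
      rw [reluNet_succ θ z h j, reluNet_succ θ' z h j]
      refine (abs_ite_max_zero_sub_le _ _ _).trans ?_
      calc _ ≤ κ i * (dist θ θ' * (C * (1 + ‖z‖)) + R * (L * (1 + ‖z‖) * dist θ θ'))
              + dist θ θ' * (1 + ‖z‖) := by
            simpa using abs_sum_mul_add_sub_sum_mul_add_le
              (fun l => (θ'.abs_weight_le_norm ⟨i, h⟩ j l).trans hθ') (hC θ hθ z)
              (fun l => NNParams.abs_weight_sub_le_dist θ θ' ⟨i, h⟩ j l) (hL θ θ' hθ hθ' z)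
              ((NNParams.abs_bias_sub_le_dist θ θ' ⟨i, h⟩ j).trans
                (le_mul_of_one_le_right dist_nonneg hz))
        _ = _ := by ring
    · exact ⟨0, fun θ θ' _ _ z j => by simp [reluNet_succ_of_le _ z h]⟩

end Network

section Loss

variable {κ : ℕ → ℕ} {n : ℕ} (fhat : (Fin (κ 0) → ℝ) → (Fin (κ n) → ℝ))

lemma exists_reluLoss_le (R : ℝ) :
    ∃ A B : ℝ, ∀ θ : NNParams κ n, ‖θ‖ ≤ R → ∀ z,
      reluLoss κ n fhat θ z ≤ A * (1 + ‖z‖) ^ 2 + B * ∑ j, fhat z j ^ 2 := by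
  obtain ⟨C, hC⟩ := exists_abs_reluNet_le (κ := κ) (n := n) R n
  refine ⟨2 * κ n * C ^ 2, 2, fun θ hθ z => ?_⟩
  calc reluLoss κ n fhat θ z ≤ ∑ j, (2 * (C * (1 + ‖z‖)) ^ 2 + 2 * fhat z j ^ 2) :=
        Finset.sum_le_sum fun j _ => sub_sq_le_of_abs_le (hC θ hθ z j)
    _ = _ := by simp [Finset.sum_add_distrib, Finset.mul_sum]; ring

lemma exists_abs_reluLoss_sub_le (R : ℝ) :
    ∃ A B : ℝ, ∀ θ θ' : NNParams κ n, ‖θ‖ ≤ R → ‖θ'‖ ≤ R → ∀ z,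
      |reluLoss κ n fhat θ z - reluLoss κ n fhat θ' z|
        ≤ (A * (1 + ‖z‖) ^ 2 + B * ∑ j, fhat z j ^ 2) * dist θ θ' := by
  obtain ⟨C, hC⟩ := exists_abs_reluNet_le (κ := κ) (n := n) R n
  obtain ⟨L, hL⟩ := exists_abs_reluNet_sub_le (κ := κ) (n := n) R n
  refine ⟨L * (κ n * (2 * C + 1)), L, fun θ θ' hθ hθ' z => ?_⟩
  have ht : 0 < 1 + ‖z‖ := by positivity
  calc |reluLoss κ n fhat θ z - reluLoss κ n fhat θ' z|
      ≤ ∑ j, |(reluNet κ n θ z n j - fhat z j) ^ 2 - (reluNet κ n θ' z n j - fhat z j) ^ 2| := by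
        rw [reluLoss, reluLoss, ← Finset.sum_sub_distrib]
        exact Finset.abs_sum_le_sum_abs _ _
    _ ≤ ∑ j, L * dist θ θ' * ((2 * C + 1) * (1 + ‖z‖) ^ 2 + fhat z j ^ 2) :=
        Finset.sum_le_sum fun j _ => abs_sub_sq_sub_sub_sq_le ht (hC θ hθ z j) (hC θ' hθ' z j)
          ((hL θ θ' hθ hθ' z j).trans_eq (by ring))
    _ = _ := by simp only [Finset.sum_add_distrib, ← Finset.mul_sum]; simp; ring

end Loss

lemma integrable_reluLoss {κ : ℕ → ℕ} {n : ℕ} {fhat : (Fin (κ 0) → ℝ) → (Fin (κ n) → ℝ)}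
    (hfhat : Measurable fhat)
    (hmom : Integrable (fun z => ∑ j, (fhat z j) ^ 2) (stdGaussian (κ 0))) (θ : NNParams κ n) :
    Integrable (reluLoss κ n fhat θ) (stdGaussian (κ 0)) := by
  obtain ⟨A, B, hAB⟩ := exists_reluLoss_le fhat ‖θ‖
  have hmeas : Measurable (reluLoss κ n fhat θ) := by
    have := continuous_reluNet θ n
    unfold reluLoss; fun_prop
  refine (((integrable_one_add_norm_sq_stdGaussian _).const_mul A).add
    (hmom.const_mul B)).mono' hmeas.aestronglyMeasurable (.of_forall fun z => ?_)
  rw [Real.norm_eq_abs, abs_of_nonneg (Finset.sum_nonneg fun j _ => sq_nonneg _)]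
  exact hAB θ le_rfl z

theorem stmt_13_general (κ : ℕ → ℕ) (n : ℕ)
    (fhat : (Fin (κ 0) → ℝ) → (Fin (κ n) → ℝ)) (hfhat : Measurable fhat)
    (hmom0 : Integrable (fun z => ∑ j, (fhat z j) ^ 2) (stdGaussian (κ 0)))
    (Θ : Set (NNParams κ n)) (hΘb : Bornology.IsBounded Θ) :
    ∃ C : NNReal, LipschitzOnWith C
      (fun θ => ∫ z, reluLoss κ n fhat θ z ∂(stdGaussian (κ 0))) Θ := by
  obtain ⟨R, hR⟩ := hΘb.exists_norm_le
  obtain ⟨A, B, hAB⟩ := exists_abs_reluLoss_sub_le fhat R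
  exact ⟨_, lipschitzOnWith_integral_of_abs_sub_le
    (fun θ _ => integrable_reluLoss hfhat hmom0 θ)
    (((integrable_one_add_norm_sq_stdGaussian _).const_mul A).add (hmom0.const_mul B))
    (fun θ hθ θ' hθ' => .of_forall (hAB θ θ' (hR θ hθ) (hR θ' hθ')))⟩

/-- **Lipschitz continuity of the expected loss of the ReLU network on a bounded set
(Theorem 2.5, item 3).**  The expected loss `θ ↦ E_z[f(θ,z)]` is Lipschitz continuous
on the bounded convex set `Θ`. -/
theorem stmt_13 (κ : ℕ → ℕ) (n : ℕ) (hn : 1 ≤ n)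
    (fhat : (Fin (κ 0) → ℝ) → (Fin (κ n) → ℝ)) (hfhat : Measurable fhat)
    (hmom0 : Integrable (fun z => ∑ j, (fhat z j) ^ 2) (stdGaussian (κ 0)))
    (hmom1 : ∀ k : Fin (κ 0),
      Integrable (fun z => (∑ j, (fhat z j) ^ 2) * |z k|) (stdGaussian (κ 0)))
    (hmom2 : ∀ k : Fin (κ 0),
      Integrable (fun z => (∑ j, (fhat z j) ^ 2) * |z k| ^ 2) (stdGaussian (κ 0)))
    (hmom3 : ∀ k : Fin (κ 0),
      Integrable (fun z => Real.sqrt (∑ j, (fhat z j) ^ 2) * |z k| ^ 2) (stdGaussian (κ 0)))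
    (hmom4 : ∀ k : Fin (κ 0),
      Integrable (fun z => (∑ j, (fhat z j) ^ 2) * |z k| ^ 3) (stdGaussian (κ 0)))
    (Θ : Set (NNParams κ n)) (hΘb : Bornology.IsBounded Θ) (hΘc : Convex ℝ Θ)
    (hΘd : ∀ θ ∈ Θ, NonzeroPreact κ n θ) :
    ∃ C : NNReal, LipschitzOnWith C
      (fun θ => ∫ z, reluLoss κ n fhat θ z ∂(stdGaussian (κ 0))) Θ :=
  stmt_13_general κ n fhat hfhat hmom0 Θ hΘb
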